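/- Fix η ∈ (0,1) and ε ∈ (0,1). Then there exist a constant θ ∈ ℝ and N₀ ∈ ℕ such that for every n ≥ N₀ there exist an integer M ≥ 1, real numbers q₁,…,q_M ∈ [0,1], and a decoder g : {0,e,1}^n → {1,…,M} with average error probability (1/M)·∑_{m=1}^M ℙ_{Y ∼ P_m^{⊗n}}[ g(Y) ≠ m ] ≤ ε and log₂ M ≥ log₂( ⌈ (1−η)·√n / (−Φ⁻¹(ε/2)) ⌉ ) + θ, where P_m is the distribution on {0,e,1} with P_m(0) = q_m(1−η), P_m(e) = η, P_m(1) = (1−q_m)(1−η). -/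

import Mathlib

/-!
Code the message `m` into the marginal whose expected number of zeros is `m d`, with spacing
`d = √(n / ε)`, and decode by rounding the observed number of zeros divided by `d`. The number
of zeros is a sum of `n` i.i.d. indicators, so Chebyshev's inequality bounds each error
probability by `n / (4 (d / 2)²) = ε`. The codewords `q_m = m d / (n (1 - η))` stay in `[0, 1]`
for about `(1 - η) n / d = (1 - η) √(ε n)` messages; this is of order `√n`, which is all the
claimed bound sees, since the constant `-Φ⁻¹(ε / 2)` is absorbed into `θ`.
-/

/-- Probability of the event `E ⊆ (Fin k)^n` under the `n`-fold product measure whose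
coordinates are i.i.d. with common distribution `P` on `Fin k`. -/
noncomputable def prodProb {k : ℕ} (P : Fin k → ℝ) (n : ℕ) (E : Set (Fin n → Fin k)) : ℝ :=
  ∑ y : Fin n → Fin k, E.indicator (fun y => ∏ i, P (y i)) y

/-- The cumulative distribution function of the standard normal distribution. -/
noncomputable def stdNormalCDF (x : ℝ) : ℝ :=
  ∫ t in Set.Iic x, (Real.sqrt (2 * Real.pi))⁻¹ * Real.exp (-t ^ 2 / 2)

/-- The inverse of the standard normal CDF. -/
noncomputable def stdNormalCDFInv : ℝ → ℝ :=
  Function.invFun stdNormalCDF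

open Finset

theorem Fin.clamp_toNat_round_div_eq {K : ℕ} (m : Fin (K + 1)) {s d : ℝ} (hd : 0 < d)
    (h : |s - m * d| < d / 2) : Fin.clamp (round (s / d)).toNat K = m := by
  have hround : round (s / d) = m := by
    have hdist : |s / d - m| < 1 / 2 := by
      rw [show s / d - m = (s - m * d) / d by field_simp, abs_div, abs_of_pos hd,
        div_lt_iff₀ hd]
      linarith
    rw [round_eq_iff, Set.mem_Ico]
    push_cast
    constructor <;> linarith [abs_sub_lt_iff.1 hdist]
  ext
  simp only [Fin.clamp, hround, Int.toNat_natCast, inf_eq_left]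
  exact Nat.lt_succ_iff.1 m.isLt

section ProductDistribution

variable {k n : ℕ} {P : Fin k → ℝ}

theorem prodProb_mono (hP : ∀ x, 0 ≤ P x) {E F : Set (Fin n → Fin k)} (hEF : E ⊆ F) :
    prodProb P n E ≤ prodProb P n F :=
  sum_le_sum fun y _ => Set.indicator_le_indicator_of_subset hEF
    (fun y => prod_nonneg fun i _ => hP (y i)) y

theorem sum_prod_mul_prod_eq_prod_sum_mul (w : Fin n → Fin k → ℝ) :
    ∑ y : Fin n → Fin k, (∏ i, P (y i)) * ∏ i, w i (y i) = ∏ i, ∑ x, P x * w i x := by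
  simp_rw [Fintype.prod_sum, ← prod_mul_distrib]

theorem sum_prod_mul_apply_mul_apply (hP : ∑ x, P x = 1) {g : Fin k → ℝ}
    (hg : ∑ x, P x * g x = 0) (i j : Fin n) :
    ∑ y : Fin n → Fin k, (∏ l, P (y l)) * (g (y i) * g (y j))
      = if i = j then ∑ x, P x * g x ^ 2 else 0 := by
  have hprod : ∀ y : Fin n → Fin k, g (y i) * g (y j)
      = ∏ l, (if l = i then g (y l) else 1) * (if l = j then g (y l) else 1) := fun y => by
    rw [prod_mul_distrib, Fintype.prod_ite_eq', Fintype.prod_ite_eq']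
  simp_rw [hprod]
  rw [sum_prod_mul_prod_eq_prod_sum_mul fun l x =>
    (if l = i then g x else 1) * (if l = j then g x else 1)]
  split_ifs with hij
  · subst hij
    rw [← Fintype.prod_ite_eq' i fun _ => ∑ x, P x * g x ^ 2]
    refine prod_congr rfl fun l _ => ?_
    by_cases hl : l = i <;> simp [hl, hP, sq]
  · refine prod_eq_zero (mem_univ i) ?_
    simpa [hij] using hg

theorem sum_prod_mul_sq_sum_apply (hP : ∑ x, P x = 1) {g : Fin k → ℝ}
    (hg : ∑ x, P x * g x = 0) :
    ∑ y : Fin n → Fin k, (∏ l, P (y l)) * (∑ i, g (y i)) ^ 2 = n * ∑ x, P x * g x ^ 2 := by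
  calc ∑ y : Fin n → Fin k, (∏ l, P (y l)) * (∑ i, g (y i)) ^ 2
      = ∑ i, ∑ j, ∑ y : Fin n → Fin k, (∏ l, P (y l)) * (g (y i) * g (y j)) := by
        simp_rw [sq, sum_mul_sum, mul_sum]
        rw [sum_comm]
        exact sum_congr rfl fun i _ => sum_comm
    _ = n * ∑ x, P x * g x ^ 2 := by
        simp [sum_prod_mul_apply_mul_apply hP hg]

theorem prodProb_le_sum_sq_div (hP : ∀ x, 0 ≤ P x) (X : (Fin n → Fin k) → ℝ) {t : ℝ}
    (ht : 0 < t) :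
    prodProb P n {y | t ≤ |X y|} ≤ (∑ y, (∏ i, P (y i)) * X y ^ 2) / t ^ 2 := by
  rw [prodProb, sum_div]
  refine sum_le_sum fun y _ => ?_
  have hPy : 0 ≤ ∏ i, P (y i) := prod_nonneg fun i _ => hP (y i)
  by_cases hy : y ∈ {y | t ≤ |X y|}
  · rw [Set.indicator_of_mem hy, le_div_iff₀ (by positivity)]
    exact mul_le_mul_of_nonneg_left (sq_le_sq.2 (by rwa [abs_of_pos ht])) hPy
  · rw [Set.indicator_of_notMem hy]
    positivity

theorem prodProb_abs_sum_apply_ge_le (hP₀ : ∀ x, 0 ≤ P x) (hP : ∑ x, P x = 1)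
    {g : Fin k → ℝ} (hg : ∑ x, P x * g x = 0) {t : ℝ} (ht : 0 < t) :
    prodProb P n {y | t ≤ |∑ i, g (y i)|} ≤ n * (∑ x, P x * g x ^ 2) / t ^ 2 := by
  simpa only [sum_prod_mul_sq_sum_apply hP hg] using
    prodProb_le_sum_sq_div hP₀ (fun y => ∑ i, g (y i)) ht

def symbolCount (a : Fin k) (y : Fin n → Fin k) : ℝ :=
  ∑ i, if y i = a then 1 else 0

theorem sum_mul_sq_indicator_sub (hP : ∑ x, P x = 1) (a : Fin k) :
    ∑ x, P x * ((if x = a then 1 else 0) - P a) ^ 2 = P a * (1 - P a) := by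
  have hterm : ∀ x, P x * ((if x = a then 1 else 0) - P a) ^ 2
      = (if x = a then P x * (1 - 2 * P a) else 0) + P a ^ 2 * P x := fun x => by
    split_ifs <;> ring
  simp_rw [hterm, sum_add_distrib, Fintype.sum_ite_eq', ← mul_sum, hP]
  ring

theorem prodProb_abs_symbolCount_sub_ge_le (hP₀ : ∀ x, 0 ≤ P x) (hP : ∑ x, P x = 1)
    (a : Fin k) {t : ℝ} (ht : 0 < t) :
    prodProb P n {y | t ≤ |symbolCount a y - n * P a|} ≤ n / (4 * t ^ 2) := by
  set g : Fin k → ℝ := fun x => (if x = a then 1 else 0) - P a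
  have hg : ∑ x, P x * g x = 0 := by
    simp [g, mul_sub, ← sum_mul, hP]
  have hcount : ∀ y : Fin n → Fin k, symbolCount a y - n * P a = ∑ i, g (y i) := fun y => by
    simp [g, symbolCount, sum_sub_distrib]
  have hvar : ∑ x, P x * g x ^ 2 ≤ 1 / 4 := by
    rw [sum_mul_sq_indicator_sub hP]
    nlinarith [sq_nonneg (P a - 1 / 2)]
  simp_rw [hcount]
  calc prodProb P n {y | t ≤ |∑ i, g (y i)|} ≤ n * (∑ x, P x * g x ^ 2) / t ^ 2 :=
        prodProb_abs_sum_apply_ge_le hP₀ hP hg ht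
    _ ≤ n * (1 / 4) / t ^ 2 := by gcongr
    _ = n / (4 * t ^ 2) := by ring

theorem prodProb_clamp_round_ne_le (hP₀ : ∀ x, 0 ≤ P x) (hP : ∑ x, P x = 1) (a : Fin k)
    {K : ℕ} (m : Fin (K + 1)) {d : ℝ} (hd : 0 < d) (hm : n * P a = m * d) :
    prodProb P n {y | Fin.clamp (round (symbolCount a y / d)).toNat K ≠ m} ≤ n / d ^ 2 :=
  calc prodProb P n {y | Fin.clamp (round (symbolCount a y / d)).toNat K ≠ m}
      ≤ prodProb P n {y | d / 2 ≤ |symbolCount a y - n * P a|} := by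
        refine prodProb_mono hP₀ fun y hy => ?_
        by_contra hnear
        rw [hm] at hnear
        exact hy (Fin.clamp_toNat_round_div_eq m hd (not_le.1 hnear))
    _ ≤ n / (4 * (d / 2) ^ 2) := prodProb_abs_symbolCount_sub_ge_le hP₀ hP a (by positivity)
    _ = n / d ^ 2 := by ring

end ProductDistribution

theorem Nat.ceil_mul_le_max_add_one_mul {x s : ℝ} (hs : 1 ≤ s) :
    (⌈x * s⌉₊ : ℝ) ≤ (max x 0 + 1) * s := by
  have hx : 0 ≤ max x 0 * s := by positivity
  calc (⌈x * s⌉₊ : ℝ) ≤ ⌈max x 0 * s⌉₊ := by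
        gcongr
        exact le_max_left x 0
    _ ≤ max x 0 * s + 1 := (Nat.ceil_lt_add_one hx).le
    _ ≤ (max x 0 + 1) * s := by linarith

theorem logb_add_min_le_logb {b A M K L s : ℝ} (hb : 1 < b) (hL : 0 < L) (hs : 0 < s)
    (hA₀ : 0 ≤ A) (hA : A ≤ K * s) (hM₁ : 1 ≤ M) (hM : L * s ≤ M) :
    Real.logb b A + min 0 (Real.logb b L - Real.logb b K) ≤ Real.logb b M := by
  rcases hA₀.eq_or_lt with rfl | hApos
  · rw [Real.logb_zero, zero_add]
    exact (min_le_left _ _).trans (Real.logb_nonneg hb hM₁)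
  have hK : 0 < K := pos_of_mul_pos_left (hApos.trans_le hA) hs.le
  have hAK : Real.logb b A ≤ Real.logb b K + Real.logb b s := by
    rw [← Real.logb_mul hK.ne' hs.ne']
    exact Real.logb_le_logb_of_le hb hApos hA
  have hLM : Real.logb b L + Real.logb b s ≤ Real.logb b M := by
    rw [← Real.logb_mul hL.ne' hs.ne']
    exact Real.logb_le_logb_of_le hb (by positivity) hM
  linarith [min_le_right 0 (Real.logb b L - Real.logb b K)]

section BECCode

variable {η d q : ℝ} {n : ℕ}

noncomputable def becMarginal (η q : ℝ) : Fin 3 → ℝ :=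
  ![q * (1 - η), η, (1 - q) * (1 - η)]

theorem becMarginal_nonneg (hη₀ : 0 ≤ η) (hη₁ : η ≤ 1) (hq₀ : 0 ≤ q) (hq₁ : q ≤ 1)
    (x : Fin 3) : 0 ≤ becMarginal η q x := by
  have hc : 0 ≤ 1 - η := sub_nonneg.2 hη₁
  fin_cases x
  · exact mul_nonneg hq₀ hc
  · exact hη₀
  · exact mul_nonneg (sub_nonneg.2 hq₁) hc

theorem sum_becMarginal : ∑ x, becMarginal η q x = 1 := by
  simp only [becMarginal, Fin.sum_univ_three, Matrix.cons_val_zero, Matrix.cons_val_one,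
    Matrix.cons_val]
  ring

noncomputable def becCodeword (η d : ℝ) (n m : ℕ) : ℝ :=
  m * d / (n * (1 - η))

theorem becCodeword_mem_Icc (hη₁ : η < 1) (hn : 0 < n) (hd : 0 < d) {L : ℕ}
    (hL : L * d ≤ (1 - η) * n) (m : Fin (L + 1)) : becCodeword η d n m ∈ Set.Icc 0 1 := by
  have hc : 0 < 1 - η := sub_pos.2 hη₁
  have hm : (m : ℝ) ≤ L := by exact_mod_cast Nat.lt_succ_iff.1 m.isLt
  refine ⟨by unfold becCodeword; positivity, (div_le_one (by positivity)).2 ?_⟩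
  nlinarith

theorem natCast_mul_becMarginal_becCodeword_zero (hη₁ : η < 1) (hn : 0 < n) (m : ℕ) :
    n * becMarginal η (becCodeword η d n m) 0 = m * d := by
  have hc : 0 < 1 - η := sub_pos.2 hη₁
  simp only [becMarginal, becCodeword, Matrix.cons_val_zero]
  field_simp

theorem average_prodProb_becMarginal_clamp_round_ne_le (hη₀ : 0 ≤ η) (hη₁ : η < 1)
    (hn : 0 < n) (hd : 0 < d) {L : ℕ} (hL : L * d ≤ (1 - η) * n) :
    1 / ((L + 1 : ℕ) : ℝ) * ∑ m : Fin (L + 1), prodProb (becMarginal η (becCodeword η d n m)) n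
      {y | Fin.clamp (round (symbolCount 0 y / d)).toNat L ≠ m} ≤ n / d ^ 2 := by
  have herr : ∀ m : Fin (L + 1), prodProb (becMarginal η (becCodeword η d n m)) n
      {y | Fin.clamp (round (symbolCount 0 y / d)).toNat L ≠ m} ≤ n / d ^ 2 := fun m => by
    obtain ⟨hq₀, hq₁⟩ := becCodeword_mem_Icc hη₁ hn hd hL m
    exact prodProb_clamp_round_ne_le (becMarginal_nonneg hη₀ hη₁.le hq₀ hq₁)
      sum_becMarginal 0 m hd (natCast_mul_becMarginal_becCodeword_zero hη₁ hn m)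
  rw [one_div_mul_eq_div, div_le_iff₀ (by positivity)]
  refine (sum_le_card_nsmul univ _ _ fun m _ => herr m).trans_eq ?_
  simp [mul_comm]

end BECCode

theorem gaussian_approximation_bec_general (η : ℝ) (hη0 : 0 < η) (hη1 : η < 1)
    (ε : ℝ) (hε0 : 0 < ε) :
    ∃ θ : ℝ, ∃ N₀ : ℕ, ∀ n : ℕ, N₀ ≤ n →
      ∃ M : ℕ, 1 ≤ M ∧ ∃ q : Fin M → ℝ,
        (∀ m, 0 ≤ q m ∧ q m ≤ 1) ∧
        ∃ g : (Fin n → Fin 3) → Fin M,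
          (1 / (M : ℝ)) * ∑ m : Fin M,
              prodProb ![q m * (1 - η), η, (1 - q m) * (1 - η)] n {y | g y ≠ m} ≤ ε ∧
          Real.logb 2 (⌈(1 - η) * Real.sqrt n / (-stdNormalCDFInv (ε / 2))⌉₊ : ℝ) + θ
            ≤ Real.logb 2 M := by
  set K := max ((1 - η) / -stdNormalCDFInv (ε / 2)) 0 + 1
  refine ⟨min 0 (Real.logb 2 ((1 - η) * √ε) - Real.logb 2 K), 1, fun n hn => ?_⟩
  have hn₀ : (0 : ℝ) < n := by exact_mod_cast hn
  set d := √n / √ε with hd_def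
  have hd : 0 < d := by positivity
  have hn_div_d : n / d ^ 2 = ε := by
    rw [div_pow, Real.sq_sqrt hn₀.le, Real.sq_sqrt hε0.le]
    field_simp
  have hc_n_div_d : (1 - η) * n / d = (1 - η) * √ε * √n := by
    rw [hd_def]
    field_simp
    rw [Real.sq_sqrt hn₀.le]
  set L := ⌊(1 - η) * n / d⌋₊
  have hL : L * d ≤ (1 - η) * n := (le_div_iff₀ hd).1 (Nat.floor_le (by positivity))
  refine ⟨L + 1, le_add_self, fun m => becCodeword η d n m,
    becCodeword_mem_Icc hη1 hn hd hL,
    fun y => Fin.clamp (round (symbolCount 0 y / d)).toNat L,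
    (average_prodProb_becMarginal_clamp_round_ne_le hη0.le hη1 hn hd hL).trans_eq hn_div_d, ?_⟩
  have hceil : (⌈(1 - η) * √n / -stdNormalCDFInv (ε / 2)⌉₊ : ℝ) ≤ K * √n := by
    rw [mul_div_right_comm]
    exact Nat.ceil_mul_le_max_add_one_mul (Real.one_le_sqrt.2 (by exact_mod_cast hn))
  have hM : (1 - η) * √ε * √n ≤ ((L + 1 : ℕ) : ℝ) := by
    push_cast
    linarith [Nat.lt_floor_add_one ((1 - η) * n / d)]
  exact logb_add_min_le_logb one_lt_two (mul_pos (sub_pos.2 hη1) (by positivity))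
    (by positivity) (Nat.cast_nonneg _) hceil (by norm_cast; omega) hM

/-- Gaussian approximation for the BEC permutation channel with erasure
probability `η ∈ (0,1)`: there are `θ ∈ ℝ` and `N₀` such that for all `n ≥ N₀` there
are `M ≥ 1` marginals `P_m = (q_m(1−η), η, (1−q_m)(1−η))` on the three-symbol alphabet
`{0, e, 1}` (encoded as `Fin 3`) and a decoder with average error at most `ε` and
`log₂ M ≥ log₂⌈(1−η)·√n/(−Φ⁻¹(ε/2))⌉ + θ`. -/
theorem gaussian_approximation_bec (η : ℝ) (hη0 : 0 < η) (hη1 : η < 1)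
    (ε : ℝ) (hε0 : 0 < ε) (hε1 : ε < 1) :
    ∃ θ : ℝ, ∃ N₀ : ℕ, ∀ n : ℕ, N₀ ≤ n →
      ∃ M : ℕ, 1 ≤ M ∧ ∃ q : Fin M → ℝ,
        (∀ m, 0 ≤ q m ∧ q m ≤ 1) ∧
        ∃ g : (Fin n → Fin 3) → Fin M,
          (1 / (M : ℝ)) * ∑ m : Fin M,
              prodProb ![q m * (1 - η), η, (1 - q m) * (1 - η)] n {y | g y ≠ m} ≤ ε ∧
          Real.logb 2 (⌈(1 - η) * Real.sqrt n / (-stdNormalCDFInv (ε / 2))⌉₊ : ℝ) + θ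
            ≤ Real.logb 2 M :=
  gaussian_approximation_bec_general η hη0 hη1 ε hε0
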